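/- Let G be a finite simple graph with vertex set {v_1, ..., v_n} and m edges, and let H_G be the graph constructed as follows: the vertex set of H_G contains, for each i, two adjacent vertices v_i and v_i' joined by an edge; the edges of G themselves are not included; instead, for each edge v_i v_j of G, one adds six pairwise internally disjoint paths, each with four new internal vertices (so each path has five edges): three such paths from v_i to v_j' and three such paths from v_i' to v_j, all internal vertices being new and distinct across all paths. Then rho_e^o(H_G) = 12m + alpha(G). -/

import Mathlib

open scoped Classical

variable {V : Type*}

/-- Two edges `e₁, e₂` have a common edge in `G` if some edge of `G`, different from both,
joins an endvertex of `e₁` to an endvertex of `e₂`. -/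
def HasCommonEdge (G : SimpleGraph V) (e₁ e₂ : Sym2 V) : Prop :=
  ∃ x y : V, x ∈ e₁ ∧ y ∈ e₂ ∧ G.Adj x y ∧ s(x, y) ≠ e₁ ∧ s(x, y) ≠ e₂

/-- `B` is an edge open packing set of `G`: a set of edges of `G` no two distinct members
of which have a common edge in `G`. -/
def IsEOP (G : SimpleGraph V) (B : Set (Sym2 V)) : Prop :=
  B ⊆ G.edgeSet ∧ ∀ e₁ ∈ B, ∀ e₂ ∈ B, e₁ ≠ e₂ → ¬ HasCommonEdge G e₁ e₂

/-- The edge open packing number of `G`: the maximum cardinality of an EOP set of `G`. -/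
noncomputable def eopNum (G : SimpleGraph V) : ℕ :=
  sSup {n | ∃ B : Set (Sym2 V), IsEOP G B ∧ B.ncard = n}

/-- The independence number of `G`. -/
noncomputable def indepNum (G : SimpleGraph V) : ℕ :=
  sSup {n | ∃ I : Set V, (∀ a ∈ I, ∀ b ∈ I, ¬ G.Adj a b) ∧ I.ncard = n}

/-- The base (asymmetric) adjacency relation of the graph `H_G`: for each vertex `v` of `G`
there are two vertices `v = Sum.inl (v, 0)` and `v' = Sum.inl (v, 1)` joined by an edge, and
for every ordered adjacent pair `(a, b)` of `G` (so each edge of `G` yields six paths, three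
in each direction) and each `p : Fin 3` there is a path with five edges from `(a, 0)` to
`(b, 1)` whose four internal vertices `Sum.inr (⟨(a,b),_⟩, p, t)`, `t : Fin 4`, are new and
distinct across all paths. The edges of `G` themselves are not included. -/
def HGRel (G : SimpleGraph V) :
    ((V × Fin 2) ⊕ ({p : V × V // G.Adj p.1 p.2} × Fin 3 × Fin 4)) →
    ((V × Fin 2) ⊕ ({p : V × V // G.Adj p.1 p.2} × Fin 3 × Fin 4)) → Prop :=
  fun x y =>
    (∃ v : V, x = Sum.inl (v, 0) ∧ y = Sum.inl (v, 1)) ∨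
    (∃ (q : {p : V × V // G.Adj p.1 p.2}) (p : Fin 3),
      (x = Sum.inl (q.1.1, 0) ∧ y = Sum.inr (q, p, 0)) ∨
      (∃ t : Fin 3, x = Sum.inr (q, p, t.castSucc) ∧ y = Sum.inr (q, p, t.succ)) ∨
      (x = Sum.inr (q, p, 3) ∧ y = Sum.inl (q.1.2, 1)))

/-- The graph `H_G`: the symmetrization of `HGRel G`. -/
def HG (G : SimpleGraph V) :
    SimpleGraph ((V × Fin 2) ⊕ ({p : V × V // G.Adj p.1 p.2} × Fin 3 × Fin 4)) where
  Adj x y := x ≠ y ∧ (HGRel G x y ∨ HGRel G y x)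
  symm := ⟨fun x y h => ⟨fun he => h.1 he.symm, h.2.symm⟩⟩
  loopless := ⟨fun x h => h.1 rfl⟩
/-!
Let `B` be an EOP set of `H_G` and `S` the set of vertices `v` with `v v' ∈ B`. Inside a path,
two edges at distance two are joined by the edge between them, and the three paths from `a` to
`b'` are linked at their ends; this leaves room for at most six edges of `B` on them, and for at
most eleven on the six paths of an edge `ab` of `G` with `a, b ∈ S`. Hence
`|B| ≤ |S| + 12m - e(G[S]) ≤ 12m + α(G)`, because deleting one endpoint of every edge of `G[S]`
leaves an independent set.

Conversely, for a maximum independent set `I`, take the edges `v v'` with `v ∈ I`, the middle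
edge of every path and, on a path starting at `a`, its fourth edge if `a ∈ I` and its second edge
otherwise. Every edge of `H_G` has an endpoint touched by no other edge of this set, so it is an
EOP set, and it has `12m + α(G)` edges.
-/

open Finset

section EdgeOpenPacking

variable {H : SimpleGraph V} {B : Set (Sym2 V)}

lemma IsEOP.eq_of_adj (hB : IsEOP H B) {e₁ e₂ : Sym2 V} (h₁ : e₁ ∈ B) (h₂ : e₂ ∈ B) {x y : V}
    (hxy : H.Adj x y) (hx : x ∈ e₁) (hy : y ∈ e₂) (hne₁ : s(x, y) ≠ e₁) (hne₂ : s(x, y) ≠ e₂) :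
    e₁ = e₂ :=
  by_contra fun hne => hB.2 _ h₁ _ h₂ hne ⟨x, y, hx, hy, hxy, hne₁, hne₂⟩

lemma isEOP_of_forall_edge_exists_private_endpoint (hB : B ⊆ H.edgeSet)
    (h : ∀ f ∈ H.edgeSet, ∃ x ∈ f, ∀ e ∈ B, x ∈ e → e = f) : IsEOP H B := by
  refine ⟨hB, fun e₁ h₁ e₂ h₂ _ ⟨x, y, hx, hy, hxy, hne₁, hne₂⟩ => ?_⟩
  obtain ⟨z, hz, hpriv⟩ := h s(x, y) hxy
  rcases Sym2.mem_iff.1 hz with rfl | rfl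
  · exact hne₁ (hpriv _ h₁ hx).symm
  · exact hne₂ (hpriv _ h₂ hy).symm

lemma eopNum_le {n : ℕ} (h : ∀ B, IsEOP H B → B.ncard ≤ n) : eopNum H ≤ n :=
  csSup_le ⟨0, ∅, ⟨Set.empty_subset _, by simp⟩, Set.ncard_empty _⟩ fun _ ⟨B, hB, hn⟩ => hn ▸ h B hB

lemma IsEOP.ncard_le_eopNum [Finite V] (hB : IsEOP H B) : B.ncard ≤ eopNum H :=
  le_csSup ⟨Nat.card (Sym2 V), fun _ ⟨B, _, hn⟩ => hn ▸ Set.ncard_le_card B⟩ ⟨B, hB, rfl⟩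

end EdgeOpenPacking

section IndependenceNumber

variable {G : SimpleGraph V}

lemma bddAbove_ncard_indep [Finite V] :
    BddAbove {n | ∃ I : Set V, (∀ a ∈ I, ∀ b ∈ I, ¬ G.Adj a b) ∧ I.ncard = n} :=
  ⟨Nat.card V, fun _ ⟨I, _, hn⟩ => hn ▸ Set.ncard_le_card I⟩

lemma ncard_le_indepNum [Finite V] {I : Set V} (hI : ∀ a ∈ I, ∀ b ∈ I, ¬ G.Adj a b) :
    I.ncard ≤ indepNum G :=
  le_csSup bddAbove_ncard_indep ⟨I, hI, rfl⟩

lemma exists_ncard_eq_indepNum [Finite V] :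
    ∃ I : Set V, (∀ a ∈ I, ∀ b ∈ I, ¬ G.Adj a b) ∧ I.ncard = indepNum G :=
  Nat.sSup_mem (s := {n | ∃ I : Set V, (∀ a ∈ I, ∀ b ∈ I, ¬ G.Adj a b) ∧ I.ncard = n})
    ⟨0, ∅, by simp, Set.ncard_empty V⟩ bddAbove_ncard_indep

/-- The last term counts every edge of `G` inside `S` twice. -/
lemma exists_indep_subset_two_mul_card_le [Fintype V] (S : Finset V) :
    ∃ I ⊆ S, (∀ a ∈ I, ∀ b ∈ I, ¬ G.Adj a b) ∧
      2 * #S ≤ 2 * #I + #{p : V × V | G.Adj p.1 p.2 ∧ p.1 ∈ S ∧ p.2 ∈ S} := by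
  induction S using Finset.induction_on with
  | empty => exact ⟨∅, subset_refl _, by simp, by simp⟩
  | insert a S ha ih =>
    obtain ⟨I, hIS, hI, hcard⟩ := ih
    have hmono : #{p : V × V | G.Adj p.1 p.2 ∧ p.1 ∈ S ∧ p.2 ∈ S} ≤
        #{p : V × V | G.Adj p.1 p.2 ∧ p.1 ∈ insert a S ∧ p.2 ∈ insert a S} :=
      card_le_card fun p => by simp +contextual
    rw [card_insert_of_notMem ha]
    by_cases hb : ∃ b ∈ I, G.Adj a b
    · obtain ⟨b, hbI, hab⟩ := hb
      have hbS := hIS hbI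
      have hsub : insert (a, b) (insert (b, a)
          ({p : V × V | G.Adj p.1 p.2 ∧ p.1 ∈ S ∧ p.2 ∈ S} : Finset (V × V))) ⊆
          ({p : V × V | G.Adj p.1 p.2 ∧ p.1 ∈ insert a S ∧ p.2 ∈ insert a S} : Finset _) := by
        intro p
        simp only [mem_insert, mem_filter, mem_univ, true_and]
        rintro (rfl | rfl | ⟨hp, h1, h2⟩)
        · exact ⟨hab, .inl rfl, .inr hbS⟩
        · exact ⟨hab.symm, .inr hbS, .inl rfl⟩
        · exact ⟨hp, .inr h1, .inr h2⟩
      have hab' : (a, b) ≠ (b, a) := fun h => hab.ne (Prod.ext_iff.1 h).1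
      have hnew := card_le_card hsub
      rw [card_insert_of_notMem (by simp [hab', ha]), card_insert_of_notMem (by simp [ha])] at hnew
      exact ⟨I, hIS.trans (subset_insert _ _), hI, by omega⟩
    · push Not at hb
      refine ⟨insert a I, insert_subset_insert _ hIS, ?_, ?_⟩
      · simp only [mem_insert]
        rintro x (rfl | hx) y (rfl | hy)
        · exact G.loopless.irrefl _
        · exact hb y hy
        · exact fun h => hb x hx h.symm
        · exact hI x hx y hy
      · rw [card_insert_of_notMem fun h => ha (hIS h)]
        omega

end IndependenceNumber

/-- Read `s` as the set of positions, among the five edges of a path, of the edges lying in an EOP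
set. -/
abbrev DistTwoFree (s : Finset (Fin 5)) : Prop := ∀ i ∈ s, ∀ j ∈ s, (i : ℕ) + 2 ≠ j

namespace DistTwoFree

variable {s : Finset (Fin 5)}

lemma card_le_three (hs : DistTwoFree s) :
    #s ≤ 3 ∧ (#s = 3 → 0 ∈ s ∧ 4 ∈ s ∧ (1 ∈ s ∨ 3 ∈ s)) := by
  revert s; decide

lemma card_le_one (hs : DistTwoFree s) (h1 : 1 ∉ s) (h3 : 3 ∉ s) (h04 : ¬(0 ∈ s ∧ 4 ∈ s)) :
    #s ≤ 1 := by
  revert s; decide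

lemma card_le_two (hs : DistTwoFree s) (h1 : 1 ∉ s) (h3 : 3 ∉ s) :
    #s ≤ 2 ∧ (#s = 2 → 0 ∈ s ∧ 4 ∈ s) := by
  revert s; decide

end DistTwoFree

lemma sum_card_le_six {f : Fin 3 → Finset (Fin 5)} (hf : ∀ p, DistTwoFree (f p))
    (h01 : ∀ p p', p ≠ p' → 0 ∈ f p → 1 ∉ f p')
    (h43 : ∀ p p', p ≠ p' → 4 ∈ f p → 3 ∉ f p') :
    ∑ p, #(f p) ≤ 6 := by
  by_cases h : ∃ p, #(f p) = 3
  · obtain ⟨p, hp⟩ := h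
    obtain ⟨h0, h4, h13⟩ := (hf p).card_le_three.2 hp
    have hrest : ∀ p' ∈ ({p}ᶜ : Finset (Fin 3)), #(f p') ≤ 1 := fun p' hp' => by
      have hne : p ≠ p' := by simpa [eq_comm] using hp'
      refine (hf p').card_le_one (h01 p p' hne h0) (h43 p p' hne h4) fun ⟨h0', h4'⟩ => ?_
      rcases h13 with h1 | h3
      · exact h01 p' p hne.symm h0' h1
      · exact h43 p' p hne.symm h4' h3
    calc ∑ p, #(f p) = #(f p) + ∑ p' ∈ {p}ᶜ, #(f p') := Fintype.sum_eq_add_sum_compl p _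
      _ ≤ 3 + #({p}ᶜ : Finset (Fin 3)) • 1 := by
        gcongr
        exacts [hp.le, sum_le_card_nsmul _ _ _ hrest]
      _ ≤ 6 := by simp [card_compl]
  · push Not at h
    calc ∑ p, #(f p) ≤ #(univ : Finset (Fin 3)) • 2 :=
          sum_le_card_nsmul _ _ _ fun p _ => by have := (hf p).card_le_three.1; have := h p; omega
      _ = 6 := by simp

lemma sum_card_add_sum_card_le_eleven {f g : Fin 3 → Finset (Fin 5)}
    (hf : ∀ p, DistTwoFree (f p) ∧ 1 ∉ f p ∧ 3 ∉ f p)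
    (hg : ∀ p, DistTwoFree (g p) ∧ 1 ∉ g p ∧ 3 ∉ g p) (h : ¬(0 ∈ f 0 ∧ 4 ∈ g 0)) :
    ∑ p, #(f p) + ∑ p, #(g p) ≤ 11 := by
  have hf' := fun p => (hf p).1.card_le_two (hf p).2.1 (hf p).2.2
  have hg' := fun p => (hg p).1.card_le_two (hg p).2.1 (hg p).2.2
  have := hf' 0; have := hf' 1; have := hf' 2
  have := hg' 0; have := hg' 1; have := hg' 2
  have : #(f 0) + #(g 0) ≤ 3 := by
    by_contra! hlt
    exact h ⟨((hf' 0).2 (by omega)).1, ((hg' 0).2 (by omega)).2⟩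
  simp only [Fin.sum_univ_three]
  omega

namespace HG

abbrev Arc (G : SimpleGraph V) := {p : V × V // G.Adj p.1 p.2}

abbrev Vert (G : SimpleGraph V) := (V × Fin 2) ⊕ (Arc G × Fin 3 × Fin 4)

/-- `.inl v` indexes the edge `v v'` of `H_G`, and `.inr (q, p, i)` the `i`-th edge of the `p`-th
path from `q.1.1` to `q.1.2'`. -/
abbrev EdgeIndex (G : SimpleGraph V) := V ⊕ (Arc G × Fin 3 × Fin 5)

variable {G : SimpleGraph V}

def Arc.reverse (q : Arc G) : Arc G := ⟨(q.1.2, q.1.1), q.2.symm⟩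

lemma Arc.reverse_involutive : Function.Involutive (Arc.reverse (G := G)) := fun _ => rfl

variable (G) in
def rung (v : V) : Sym2 (Vert G) := s(.inl (v, 0), .inl (v, 1))

def pathEdge (q : Arc G) (p : Fin 3) : Fin 5 → Sym2 (Vert G) :=
  ![s(.inl (q.1.1, 0), .inr (q, p, 0)), s(.inr (q, p, 0), .inr (q, p, 1)),
    s(.inr (q, p, 1), .inr (q, p, 2)), s(.inr (q, p, 2), .inr (q, p, 3)),
    s(.inr (q, p, 3), .inl (q.1.2, 1))]

variable (G) in
def edge : EdgeIndex G → Sym2 (Vert G) :=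
  Sum.elim (rung G) fun x => pathEdge x.1 x.2.1 x.2.2

@[simp] lemma edge_inl (v : V) : edge G (.inl v) = rung G v := rfl

@[simp] lemma edge_inr (x : Arc G × Fin 3 × Fin 5) :
    edge G (.inr x) = pathEdge x.1 x.2.1 x.2.2 := rfl

@[simp] lemma inl_mem_rung {v w : V} {j : Fin 2} :
    (.inl (v, j) : Vert G) ∈ rung G w ↔ v = w := by
  fin_cases j <;> simp [rung, eq_comm]

@[simp] lemma inr_not_mem_rung {x : Arc G × Fin 3 × Fin 4} {w : V} :
    (.inr x : Vert G) ∉ rung G w := by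
  simp [rung]

@[simp] lemma inl_zero_mem_pathEdge {v : V} {q : Arc G} {p : Fin 3} {i : Fin 5} :
    (.inl (v, 0) : Vert G) ∈ pathEdge q p i ↔ i = 0 ∧ v = q.1.1 := by
  fin_cases i <;> simp [pathEdge]

@[simp] lemma inl_one_mem_pathEdge {v : V} {q : Arc G} {p : Fin 3} {i : Fin 5} :
    (.inl (v, 1) : Vert G) ∈ pathEdge q p i ↔ i = 4 ∧ v = q.1.2 := by
  fin_cases i <;> simp [pathEdge]

@[simp] lemma inr_mem_pathEdge {q q' : Arc G} {p p' : Fin 3} {t : Fin 4} {i : Fin 5} :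
    (.inr (q', p', t) : Vert G) ∈ pathEdge q p i ↔
      q' = q ∧ p' = p ∧ (i = t.castSucc ∨ i = t.succ) := by
  fin_cases i <;> fin_cases t <;> simp [pathEdge]

lemma edge_injective : Function.Injective (edge G) := by
  rintro (v | ⟨q, p, i⟩) (w | ⟨q', p', i'⟩) h
  · simpa [rung] using h
  · fin_cases i' <;> simp [rung, pathEdge] at h
  · fin_cases i <;> simp [rung, pathEdge] at h
  · fin_cases i <;> fin_cases i' <;> simp [pathEdge] at h <;> simp_all

lemma edge_mem_edgeSet (t : EdgeIndex G) : edge G t ∈ (HG G).edgeSet := by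
  rcases t with v | ⟨q, p, i⟩
  · exact ⟨by simp, .inl (.inl ⟨v, rfl, rfl⟩)⟩
  · fin_cases i
    · exact ⟨by simp, .inl (.inr ⟨q, p, .inl ⟨rfl, rfl⟩⟩)⟩
    · exact ⟨by simp, .inl (.inr ⟨q, p, .inr (.inl ⟨0, rfl, rfl⟩)⟩)⟩
    · exact ⟨by simp, .inl (.inr ⟨q, p, .inr (.inl ⟨1, rfl, rfl⟩)⟩)⟩
    · exact ⟨by simp, .inl (.inr ⟨q, p, .inr (.inl ⟨2, rfl, rfl⟩)⟩)⟩
    · exact ⟨by simp, .inl (.inr ⟨q, p, .inr (.inr ⟨rfl, rfl⟩)⟩)⟩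

lemma exists_edge_eq_of_hgRel {x y : Vert G} (h : HGRel G x y) : ∃ t, edge G t = s(x, y) := by
  rcases h with ⟨v, rfl, rfl⟩ | ⟨q, p, ⟨rfl, rfl⟩ | ⟨t, rfl, rfl⟩ | ⟨rfl, rfl⟩⟩
  · exact ⟨.inl v, rfl⟩
  · exact ⟨.inr (q, p, 0), rfl⟩
  · fin_cases t
    · exact ⟨.inr (q, p, 1), rfl⟩
    · exact ⟨.inr (q, p, 2), rfl⟩
    · exact ⟨.inr (q, p, 3), rfl⟩
  · exact ⟨.inr (q, p, 4), rfl⟩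

lemma range_edge : Set.range (edge G) = (HG G).edgeSet := by
  refine subset_antisymm (Set.range_subset_iff.2 edge_mem_edgeSet) fun e he => ?_
  induction e with
  | h x y =>
    obtain ⟨-, hxy | hyx⟩ := he
    · exact exists_edge_eq_of_hgRel hxy
    · exact Sym2.eq_swap (a := y) ▸ exists_edge_eq_of_hgRel hyx

noncomputable def pathPart (B : Set (Sym2 (Vert G))) (q : Arc G) (p : Fin 3) : Finset (Fin 5) :=
  {i | pathEdge q p i ∈ B}

@[simp] lemma mem_pathPart {B : Set (Sym2 (Vert G))} {q : Arc G} {p : Fin 3} {i : Fin 5} :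
    i ∈ pathPart B q p ↔ pathEdge q p i ∈ B := by
  simp [pathPart]

section Counting

variable [Fintype V]

noncomputable def rungs (B : Set (Sym2 (Vert G))) : Finset V := {v | rung G v ∈ B}

lemma ncard_eq_card_rungs_add_sum {B : Set (Sym2 (Vert G))} (hB : B ⊆ (HG G).edgeSet) :
    B.ncard = #(rungs B) + ∑ q, ∑ p, #(pathPart B q p) := by
  rw [← Set.ncard_preimage_of_injective_subset_range edge_injective (range_edge.symm ▸ hB),
    Set.preimage, ← coe_filter_univ, Set.ncard_coe_finset, card_filter, Fintype.sum_sum_type,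
    rungs, card_filter]
  simp only [Fintype.sum_prod_type, pathPart, card_filter, edge_inl, edge_inr]
  congr!

lemma card_arc : Fintype.card (Arc G) = 2 * G.edgeSet.ncard := by
  let e : Arc G ≃ G.Dart :=
    ⟨fun q => ⟨q.1, q.2⟩, fun d => ⟨d.toProd, d.adj⟩, fun _ => rfl, fun _ => rfl⟩
  rw [Fintype.card_congr e, G.dart_card_eq_twice_card_edges, ← SimpleGraph.coe_edgeFinset,
    Set.ncard_coe_finset]

lemma card_filter_arc (S : Finset V) :
    #{q : Arc G | q.1.1 ∈ S ∧ q.1.2 ∈ S} = #{p : V × V | G.Adj p.1 p.2 ∧ p.1 ∈ S ∧ p.2 ∈ S} := by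
  rw [← card_map (Function.Embedding.subtype _)]
  congr 1
  ext ⟨a, b⟩
  simp [and_comm]

end Counting

section UpperBound

variable {B : Set (Sym2 (Vert G))}

lemma eq_of_link (hB : IsEOP (HG G) B) {s t : EdgeIndex G} (hs : edge G s ∈ B)
    (ht : edge G t ∈ B) (u : EdgeIndex G) {x y : Vert G} (hxy : x ≠ y) (hxu : x ∈ edge G u)
    (hyu : y ∈ edge G u) (hx : x ∈ edge G s) (hy : y ∈ edge G t) (hus : u ≠ s) (hut : u ≠ t) :
    s = t := by
  have hu : edge G u = s(x, y) := (Sym2.mem_and_mem_iff hxy).1 ⟨hxu, hyu⟩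
  refine edge_injective (hB.eq_of_adj hs ht ?_ hx hy ?_ ?_)
  · exact (SimpleGraph.mem_edgeSet _).1 (hu ▸ edge_mem_edgeSet u)
  · exact hu ▸ edge_injective.ne hus
  · exact hu ▸ edge_injective.ne hut

variable (hB : IsEOP (HG G) B) (q : Arc G)
include hB

lemma distTwoFree_pathPart (p : Fin 3) : DistTwoFree (pathPart B q p) := by
  intro i hi j hj hij
  rw [mem_pathPart] at hi hj
  fin_cases i <;> fin_cases j <;> simp at hij
  · have := eq_of_link hB (s := .inr (q, p, 0)) (t := .inr (q, p, 2)) hi hj (.inr (q, p, 1))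
      (x := .inr (q, p, 0)) (y := .inr (q, p, 1))
    simp_all
  · have := eq_of_link hB (s := .inr (q, p, 1)) (t := .inr (q, p, 3)) hi hj (.inr (q, p, 2))
      (x := .inr (q, p, 1)) (y := .inr (q, p, 2))
    simp_all
  · have := eq_of_link hB (s := .inr (q, p, 2)) (t := .inr (q, p, 4)) hi hj (.inr (q, p, 3))
      (x := .inr (q, p, 2)) (y := .inr (q, p, 3))
    simp_all

lemma one_not_mem_pathPart_of_zero_mem {p p' : Fin 3} (hp : p ≠ p')
    (h0 : 0 ∈ pathPart B q p) : 1 ∉ pathPart B q p' := by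
  intro h1
  rw [mem_pathPart] at h0 h1
  have := eq_of_link hB (s := .inr (q, p, 0)) (t := .inr (q, p', 1)) h0 h1 (.inr (q, p', 0))
    (x := .inl (q.1.1, 0)) (y := .inr (q, p', 0))
  simp_all

lemma three_not_mem_pathPart_of_four_mem {p p' : Fin 3} (hp : p ≠ p')
    (h4 : 4 ∈ pathPart B q p) : 3 ∉ pathPart B q p' := by
  intro h3
  rw [mem_pathPart] at h4 h3
  have := eq_of_link hB (s := .inr (q, p, 4)) (t := .inr (q, p', 3)) h4 h3 (.inr (q, p', 4))
    (x := .inl (q.1.2, 1)) (y := .inr (q, p', 3))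
  simp_all

lemma one_not_mem_pathPart_of_rung_mem (h : rung G q.1.1 ∈ B) (p : Fin 3) :
    1 ∉ pathPart B q p := by
  intro h1
  rw [mem_pathPart] at h1
  have := eq_of_link hB (s := .inl q.1.1) (t := .inr (q, p, 1)) h h1 (.inr (q, p, 0))
    (x := .inl (q.1.1, 0)) (y := .inr (q, p, 0))
  simp_all

lemma three_not_mem_pathPart_of_rung_mem (h : rung G q.1.2 ∈ B) (p : Fin 3) :
    3 ∉ pathPart B q p := by
  intro h3
  rw [mem_pathPart] at h3
  have := eq_of_link hB (s := .inl q.1.2) (t := .inr (q, p, 3)) h h3 (.inr (q, p, 4))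
    (x := .inl (q.1.2, 1)) (y := .inr (q, p, 3))
  simp_all

lemma not_zero_mem_pathPart_and_four_mem_reverse (p p' : Fin 3) :
    ¬(0 ∈ pathPart B q p ∧ 4 ∈ pathPart B q.reverse p') := by
  rintro ⟨h0, h4⟩
  rw [mem_pathPart] at h0 h4
  have := eq_of_link hB (s := .inr (q, p, 0)) (t := .inr (q.reverse, p', 4)) h0 h4
    (.inl q.1.1) (x := .inl (q.1.1, 0)) (y := .inl (q.1.1, 1))
  simp_all [Arc.reverse]

lemma sum_card_pathPart_le_six : ∑ p, #(pathPart B q p) ≤ 6 :=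
  sum_card_le_six (distTwoFree_pathPart hB q)
    (fun _ _ hp => one_not_mem_pathPart_of_zero_mem hB q hp)
    (fun _ _ hp => three_not_mem_pathPart_of_four_mem hB q hp)

lemma sum_card_pathPart_add_reverse_le_eleven (ha : rung G q.1.1 ∈ B) (hb : rung G q.1.2 ∈ B) :
    ∑ p, #(pathPart B q p) + ∑ p, #(pathPart B q.reverse p) ≤ 11 :=
  sum_card_add_sum_card_le_eleven
    (fun p => ⟨distTwoFree_pathPart hB q p, one_not_mem_pathPart_of_rung_mem hB q ha p,
      three_not_mem_pathPart_of_rung_mem hB q hb p⟩)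
    (fun p => ⟨distTwoFree_pathPart hB q.reverse p,
      one_not_mem_pathPart_of_rung_mem hB q.reverse hb p,
      three_not_mem_pathPart_of_rung_mem hB q.reverse ha p⟩)
    (not_zero_mem_pathPart_and_four_mem_reverse hB q 0 0)

lemma ncard_le_of_isEOP [Fintype V] : B.ncard ≤ 12 * G.edgeSet.ncard + indepNum G := by
  have hpair (q : Arc G) : ∑ p, #(pathPart B q p) + ∑ p, #(pathPart B q.reverse p) +
      (if q.1.1 ∈ rungs B ∧ q.1.2 ∈ rungs B then 1 else 0) ≤ 12 := by
    split_ifs with h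
    · have := sum_card_pathPart_add_reverse_le_eleven hB q (by simpa [rungs] using h.1)
        (by simpa [rungs] using h.2)
      omega
    · have := sum_card_pathPart_le_six hB q
      have := sum_card_pathPart_le_six hB q.reverse
      omega
  have hrev : ∑ q : Arc G, ∑ p, #(pathPart B q.reverse p) = ∑ q, ∑ p, #(pathPart B q p) :=
    Fintype.sum_bijective _ Arc.reverse_involutive.bijective _ _ fun _ => rfl
  have hsum := sum_le_sum fun q (_ : q ∈ univ) => hpair q
  rw [sum_add_distrib, sum_add_distrib, hrev, sum_boole, sum_const, card_univ, card_arc,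
    Nat.cast_id, card_filter_arc, smul_eq_mul] at hsum
  obtain ⟨I, -, hI, hIS⟩ := exists_indep_subset_two_mul_card_le (G := G) (rungs B)
  have hIα : #I ≤ indepNum G := by
    simpa using ncard_le_indepNum (I := (I : Set V)) (by simpa using hI)
  rw [ncard_eq_card_rungs_add_sum hB.1]
  omega

end UpperBound

section LowerBound

variable {I : Set V}

def packingIndex (I : Set V) : EdgeIndex G → Prop
  | .inl v => v ∈ I
  | .inr (q, _, i) => i = 2 ∨ (q.1.1 ∈ I ∧ i = 3) ∨ (q.1.1 ∉ I ∧ i = 1)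

def packing (I : Set V) : Set (Sym2 (Vert G)) := edge G '' {t | packingIndex I t}

lemma rung_mem_packing {v : V} : rung G v ∈ packing I ↔ v ∈ I :=
  edge_injective.mem_set_image (a := .inl v)

lemma pathEdge_mem_packing {q : Arc G} {p : Fin 3} {i : Fin 5} :
    pathEdge q p i ∈ packing I ↔ i = 2 ∨ (q.1.1 ∈ I ∧ i = 3) ∨ (q.1.1 ∉ I ∧ i = 1) :=
  edge_injective.mem_set_image (a := .inr (q, p, i))

lemma packing_subset_edgeSet : packing (G := G) I ⊆ (HG G).edgeSet :=
  range_edge ▸ Set.image_subset_range _ _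

lemma exists_private_vertex (hI : ∀ a ∈ I, ∀ b ∈ I, ¬ G.Adj a b) (t : EdgeIndex G) :
    ∃ x ∈ edge G t, ∀ s, packingIndex I s → x ∈ edge G s → s = t := by
  rcases t with v | ⟨q, p, i⟩
  · refine ⟨.inl (v, 0), by simp, ?_⟩
    rintro (w | ⟨q', p', i'⟩) hs hx <;> simp_all [packingIndex]
  fin_cases i <;> [
    refine if ha : q.1.1 ∈ I then ⟨.inr (q, p, 0), by simp, ?_⟩ else ⟨.inl (q.1.1, 0), by simp, ?_⟩;
    refine ⟨.inr (q, p, 0), by simp, ?_⟩;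
    refine if ha : q.1.1 ∈ I then ⟨.inr (q, p, 1), by simp, ?_⟩ else ⟨.inr (q, p, 2), by simp, ?_⟩;
    refine ⟨.inr (q, p, 3), by simp, ?_⟩;
    refine if ha : q.1.1 ∈ I then
      have hb : q.1.2 ∉ I := fun hb => hI _ ha _ hb q.2
      ⟨.inl (q.1.2, 1), by simp, ?_⟩
    else ⟨.inr (q, p, 3), by simp, ?_⟩]
  all_goals
    rintro (w | ⟨q', p', i'⟩) hs hx
    · simp_all [packingIndex]
    · fin_cases i' <;> simp_all [packingIndex]

lemma isEOP_packing (hI : ∀ a ∈ I, ∀ b ∈ I, ¬ G.Adj a b) : IsEOP (HG G) (packing I) := by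
  refine isEOP_of_forall_edge_exists_private_endpoint packing_subset_edgeSet fun f hf => ?_
  obtain ⟨t, rfl⟩ := range_edge.symm ▸ hf
  obtain ⟨x, hx, hpriv⟩ := exists_private_vertex hI t
  exact ⟨x, hx, fun _ ⟨s, hs, he⟩ hxe => he ▸ congrArg (edge G) (hpriv s hs (he ▸ hxe))⟩

lemma card_pathPart_packing (q : Arc G) (p : Fin 3) : #(pathPart (packing I) q p) = 2 := by
  by_cases ha : q.1.1 ∈ I <;> simp [pathPart, pathEdge_mem_packing, ha] <;> decide

lemma ncard_packing [Fintype V] :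
    (packing (G := G) I).ncard = 12 * G.edgeSet.ncard + I.ncard := by
  have hrungs : rungs (packing (G := G) I) = I.toFinset := by
    ext v
    simp [rungs, rung_mem_packing]
  simp [ncard_eq_card_rungs_add_sum packing_subset_edgeSet, hrungs, card_pathPart_packing,
    card_arc, Set.ncard_eq_toFinset_card']
  ring

end LowerBound

end HG

/-- With `m = |E(G)|`, the graph `H_G` satisfies `ρₑᵒ(H_G) = 12m + α(G)`. -/
theorem stmt14 [Fintype V] (G : SimpleGraph V) (m : ℕ) (hm : m = G.edgeSet.ncard) :
    eopNum (HG G) = 12 * m + indepNum G := by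
  subst hm
  refine le_antisymm (eopNum_le fun B hB => HG.ncard_le_of_isEOP hB) ?_
  obtain ⟨I, hI, hIα⟩ := exists_ncard_eq_indepNum (G := G)
  rw [← hIα, ← HG.ncard_packing]
  exact (HG.isEOP_packing hI).ncard_le_eopNum
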